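/- Equivalence of standard and equal-length verdict functions: V^el_D(L)(ρ*, t) = V_D(L)(ρ*, t) for every language L of infinite timed words, delay set D, D-observation ρ*, and t ≥ τ(ρ*). -/

import Mathlib

open scoped Classical

universe u v w

/-- A finite timed word: nonnegative, non-decreasing timestamps. -/
def IsFTW {A : Type u} (ρ : List (A × ℝ)) : Prop :=
  (∀ p ∈ ρ, 0 ≤ p.2) ∧ ρ.Chain' (fun p q => p.2 ≤ q.2)

/-- Duration of a finite timed word: its last timestamp (0 for the empty word). -/
def dur {A : Type u} (ρ : List (A × ℝ)) : ℝ := ((ρ.getLast?).map Prod.snd).getD 0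

/-- An infinite timed word: nonnegative, non-decreasing, divergent timestamps. -/
def IsITW {A : Type u} (μ : ℕ → A × ℝ) : Prop :=
  (∀ i, 0 ≤ (μ i).2) ∧ (∀ i, (μ i).2 ≤ (μ (i + 1)).2) ∧
    Filter.Tendsto (fun i => (μ i).2) Filter.atTop Filter.atTop

/-- Shift every timestamp of an infinite timed word by `t`. -/
def shiftI {A : Type u} (μ : ℕ → A × ℝ) (t : ℝ) : ℕ → A × ℝ :=
  fun i => ((μ i).1, (μ i).2 + t)

/-- Shift every timestamp of a finite timed word by `t`. -/
def shiftF {A : Type u} (ρ : List (A × ℝ)) (t : ℝ) : List (A × ℝ) :=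
  ρ.map (fun p => (p.1, p.2 + t))

/-- Timed concatenation of two finite timed words at time `t`. -/
def catF {A : Type u} (ρ : List (A × ℝ)) (t : ℝ) (ρ' : List (A × ℝ)) : List (A × ℝ) :=
  ρ ++ shiftF ρ' t

/-- Timed concatenation `ρ ·_t μ` of a finite and an infinite timed word. -/
def cat {A : Type u} (ρ : List (A × ℝ)) (t : ℝ) (μ : ℕ → A × ℝ) : ℕ → A × ℝ :=
  fun i => if h : i < ρ.length then ρ.get ⟨i, h⟩
    else ((μ (i - ρ.length)).1, (μ (i - ρ.length)).2 + t)

/-- `ρ` is consistent with observation `ρs` at time `t` under latency `δ` and jitter `ε`. -/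
def Consistent {A : Type u} (δ ε : ℝ) (ρs ρ : List (A × ℝ)) (t : ℝ) : Prop :=
  IsFTW ρ ∧ dur ρ ≤ t ∧ dur ρs ≤ t ∧ ρs.length ≤ ρ.length ∧
  (∀ i, i < ρs.length → ∀ p q, ρ[i]? = some p → ρs[i]? = some q →
      p.1 = q.1 ∧ δ ≤ q.2 - p.2 ∧ q.2 - p.2 ≤ δ + ε) ∧
  (ρs.length < ρ.length → ∀ p, ρ[ρs.length]? = some p → t - (δ + ε) ≤ p.2)

/-- Ground-truths consistent with `ρs` at `t` under latency `δ` and jitter `ε`. -/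
def GTd {A : Type u} (δ ε : ℝ) (ρs : List (A × ℝ)) (t : ℝ) : Set (List (A × ℝ)) :=
  {ρ | Consistent δ ε ρs ρ t}

/-- Ground-truths consistent with `ρs` at `t` under some delay in `D`. -/
def GT {A : Type u} (D : Set (ℝ × ℝ)) (ρs : List (A × ℝ)) (t : ℝ) : Set (List (A × ℝ)) :=
  {ρ | ∃ d ∈ D, Consistent d.1 d.2 ρs ρ t}

/-- A delay set: a nonempty set of (latency, jitter) pairs in ℝ≥0². -/
def DelaySet (D : Set (ℝ × ℝ)) : Prop :=
  D.Nonempty ∧ ∀ d ∈ D, 0 ≤ d.1 ∧ 0 ≤ d.2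

/-- A `D`-observation: a finite timed word whose first timestamp is at least `δ`
for some `(δ,ε) ∈ D`. -/
def DObs {A : Type u} (D : Set (ℝ × ℝ)) (ρs : List (A × ℝ)) : Prop :=
  IsFTW ρs ∧ ∃ d ∈ D, ∀ p ∈ ρs.head?, d.1 ≤ p.2

/-- The three-valued verdict domain. -/
inductive Verdict | top | bot | unknown
deriving DecidableEq

/-- Monitoring verdict under delay. -/
noncomputable def verdict {A : Type u} (D : Set (ℝ × ℝ)) (L : Set (ℕ → A × ℝ))
    (ρs : List (A × ℝ)) (t : ℝ) : Verdict :=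
  if ∀ ρ ∈ GT D ρs t, ∀ μ, IsITW μ → cat ρ t μ ∈ L then .top
  else if ∀ ρ ∈ GT D ρs t, ∀ μ, IsITW μ → cat ρ t μ ∉ L then .bot
  else .unknown

/-- Equal-length consistent ground-truths. -/
def GTel {A : Type u} (δ ε : ℝ) (ρs : List (A × ℝ)) (t : ℝ) : Set (List (A × ℝ)) :=
  {ρ | Consistent δ ε ρs ρ t ∧ ρ.length = ρs.length}

/-- Equal-length monitoring verdict under delay. -/
noncomputable def verdictEL {A : Type u} (D : Set (ℝ × ℝ)) (L : Set (ℕ → A × ℝ))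
    (ρs : List (A × ℝ)) (t : ℝ) : Verdict :=
  if ∀ d ∈ D, ∀ ρ ∈ GTel d.1 d.2 ρs t, ∀ μ, IsITW μ →
      cat ρ (max (dur ρ) (t - (d.1 + d.2))) μ ∈ L then .top
  else if ∀ d ∈ D, ∀ ρ ∈ GTel d.1 d.2 ρs t, ∀ μ, IsITW μ →
      cat ρ (max (dur ρ) (t - (d.1 + d.2))) μ ∉ L then .bot
  else .unknown

/-- The set of delays consistent with observation `ρs` at time `t` w.r.t. `L`. -/
def ConsDelays {A : Type u} (L : Set (ℕ → A × ℝ)) (ρs : List (A × ℝ)) (t : ℝ) :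
    Set (ℝ × ℝ) :=
  {d | ∃ ρ ∈ GTd d.1 d.2 ρs t, ∃ μ, IsITW μ ∧ cat ρ t μ ∈ L}

/-- Extension relation on (finite timed word, time) pairs. -/
def ExtRel {A : Type u} (ρ : List (A × ℝ)) (t : ℝ) (ρ' : List (A × ℝ)) (t' : ℝ) : Prop :=
  ρ <+: ρ' ∧ ((ρ.length = ρ'.length ∧ t ≤ t') ∨
    (ρ.length < ρ'.length ∧ ∀ p, ρ'[ρ.length]? = some p → t ≤ p.2))
/-- A timed Büchi automaton with locations `Q` and clocks `C`;
guards are modeled as sets of clock valuations. -/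
structure TBA (A : Type u) (Q : Type v) (C : Type w) where
  init : Set Q
  trans : Set (Q × Q × A × Set C × Set (C → ℝ))
  acc : Set Q

/-- Reset the clocks in `lam` to zero. -/
noncomputable def resetVal {C : Type w} (lam : Set C) (v : C → ℝ) : C → ℝ :=
  fun x => if x ∈ lam then 0 else v x

/-- One transition step of a TBA, reading letter `a` after `d` time units. -/
def Step {A : Type u} {Q : Type v} {C : Type w} (M : TBA A Q C)
    (s : Q × (C → ℝ)) (a : A) (d : ℝ) (s' : Q × (C → ℝ)) : Prop :=
  ∃ q' lam g, (s.1, q', a, lam, g) ∈ M.trans ∧ (fun x => s.2 x + d) ∈ g ∧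
    s'.1 = q' ∧ s'.2 = resetVal lam (fun x => s.2 x + d)

/-- An infinite run of a TBA from state `s0` over the infinite timed word `μ`. -/
def InfRun {A : Type u} {Q : Type v} {C : Type w} (M : TBA A Q C)
    (s0 : Q × (C → ℝ)) (μ : ℕ → A × ℝ) (r : ℕ → Q × (C → ℝ)) : Prop :=
  r 0 = s0 ∧ ∀ i, Step M (r i) (μ i).1
    ((μ i).2 - (if i = 0 then 0 else (μ (i - 1)).2)) (r (i + 1))

/-- The language of a TBA from a given state. -/
def LangFrom {A : Type u} {Q : Type v} {C : Type w} (M : TBA A Q C)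
    (s : Q × (C → ℝ)) : Set (ℕ → A × ℝ) :=
  {μ | IsITW μ ∧ ∃ r, InfRun M s μ r ∧ {i | (r i).1 ∈ M.acc}.Infinite}

/-- The language of a TBA. -/
def Lang {A : Type u} {Q : Type v} {C : Type w} (M : TBA A Q C) : Set (ℕ → A × ℝ) :=
  {μ | ∃ q0 ∈ M.init, μ ∈ LangFrom M (q0, fun _ => 0)}

/-- The states of a TBA with nonempty language. -/
def NonEmptyStates {A : Type u} {Q : Type v} {C : Type w} (M : TBA A Q C) :
    Set (Q × (C → ℝ)) :=
  {s | (LangFrom M s).Nonempty}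

/-- The `i`-th timestamp of a finite timed word (default 0). -/
def tsd {A : Type u} (ρ : List (A × ℝ)) (i : ℕ) : ℝ := ((ρ[i]?).map Prod.snd).getD 0

/-- A finite run of a TBA from `s0` over `ρ`, ending in `send`. -/
def FinRun {A : Type u} {Q : Type v} {C : Type w} (M : TBA A Q C)
    (s0 : Q × (C → ℝ)) (ρ : List (A × ℝ)) (send : Q × (C → ℝ)) : Prop :=
  ∃ r : ℕ → Q × (C → ℝ), r 0 = s0 ∧ r ρ.length = send ∧
    ∀ i, i < ρ.length → ∀ p, ρ[i]? = some p →
      Step M (r i) p.1 (p.2 - (if i = 0 then 0 else tsd ρ (i - 1))) (r (i + 1))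

/-- The reach-set of `ρs` in `M` at `t` w.r.t. `D`: states reached on
equal-length consistent ground-truths, time-shifted by
`max 0 (t - (dur ρ + δ + ε))`. -/
def ReachSet {A : Type u} {Q : Type v} {C : Type w} (M : TBA A Q C)
    (D : Set (ℝ × ℝ)) (ρs : List (A × ℝ)) (t : ℝ) : Set (Q × (C → ℝ)) :=
  {s | ∃ d ∈ D, ∃ ρ ∈ GTel d.1 d.2 ρs t, ∃ q0 ∈ M.init, ∃ v : C → ℝ,
      FinRun M (q0, fun _ => 0) ρ (s.1, v) ∧
      s.2 = fun x => v x + max 0 (t - (dur ρ + d.1 + d.2))}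

/-- The automata-based monitor. -/
noncomputable def Monitor {A : Type u} {Q : Type v} {C : Type w} {Q' : Type*} {C' : Type*}
    (M : TBA A Q C) (Mbar : TBA A Q' C') (D : Set (ℝ × ℝ))
    (ρs : List (A × ℝ)) (t : ℝ) : Verdict :=
  if ReachSet Mbar D ρs t ∩ NonEmptyStates Mbar = ∅ then .top
  else if ReachSet M D ρs t ∩ NonEmptyStates M = ∅ then .bot
  else .unknown

/-- Input projection of a timed word, w.r.t. the input indicator `inp`. -/
def inProj {A : Type u} (inp : A → Bool) (ρ : List (A × ℝ)) : List (A × ℝ) :=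
  ρ.filter (fun p => inp p.1)

/-- Output projection of a timed word. -/
def outProj {A : Type u} (inp : A → Bool) (ρ : List (A × ℝ)) : List (A × ℝ) :=
  ρ.filter (fun p => !inp p.1)

/-- Testing consistency of ground-truth `ρ` with observation `ρs` at time `t`
under IO delay `d = (δ_I, ε_I, δ_O, ε_O)`. -/
def TCons {A : Type u} (inp : A → Bool) (d : ℝ × ℝ × ℝ × ℝ)
    (ρs ρ : List (A × ℝ)) (t : ℝ) : Prop :=
  IsFTW ρ ∧ dur ρs ≤ t ∧ dur ρ ≤ max t (dur (inProj inp ρs) + (d.1 + d.2.1)) ∧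
  (inProj inp ρ).length = (inProj inp ρs).length ∧
  (∀ (i : ℕ) (p q : A × ℝ), (inProj inp ρ)[i]? = some p → (inProj inp ρs)[i]? = some q →
      p.1 = q.1 ∧ d.1 ≤ p.2 - q.2 ∧ p.2 - q.2 ≤ d.1 + d.2.1) ∧
  (outProj inp ρs).length ≤ (outProj inp ρ).length ∧
  (∀ i, i < (outProj inp ρs).length → ∀ p q, (outProj inp ρ)[i]? = some p →
      (outProj inp ρs)[i]? = some q →
      p.1 = q.1 ∧ d.2.2.1 ≤ q.2 - p.2 ∧ q.2 - p.2 ≤ d.2.2.1 + d.2.2.2) ∧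
  ((outProj inp ρs).length < (outProj inp ρ).length →
    ∀ p, (outProj inp ρ)[(outProj inp ρs).length]? = some p →
      t - (d.2.2.1 + d.2.2.2) ≤ p.2)

/-- Testing-consistent ground-truths under some delay in `D`. -/
def GThat {A : Type u} (inp : A → Bool) (D : Set (ℝ × ℝ × ℝ × ℝ))
    (ρs : List (A × ℝ)) (t : ℝ) : Set (List (A × ℝ)) :=
  {ρ | ∃ d ∈ D, TCons inp d ρs ρ t}

/-- An IO delay set: nonempty subset of ℝ≥0⁴. -/
def IODelaySet (D : Set (ℝ × ℝ × ℝ × ℝ)) : Prop :=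
  D.Nonempty ∧ ∀ d ∈ D, 0 ≤ d.1 ∧ 0 ≤ d.2.1 ∧ 0 ≤ d.2.2.1 ∧ 0 ≤ d.2.2.2

/-- An IO `D`-observation: the first observed output has timestamp at least `δ_O`
for some delay tuple in `D`. -/
def DObsIO {A : Type u} (inp : A → Bool) (D : Set (ℝ × ℝ × ℝ × ℝ))
    (ρs : List (A × ℝ)) : Prop :=
  IsFTW ρs ∧ ∃ d ∈ D, ∀ p ∈ (outProj inp ρs).head?, d.2.2.1 ≤ p.2

/-- Testing verdict under delay. -/
noncomputable def tverdict {A : Type u} (inp : A → Bool) (D : Set (ℝ × ℝ × ℝ × ℝ))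
    (L : Set (ℕ → A × ℝ)) (ρs : List (A × ℝ)) (t : ℝ) : Verdict :=
  if ∀ ρ ∈ GThat inp D ρs t, ∀ μ, IsITW μ → cat ρ (max t (dur ρ)) μ ∈ L then .top
  else if ∀ ρ ∈ GThat inp D ρs t, ∀ μ, IsITW μ → cat ρ (max t (dur ρ)) μ ∉ L then .bot
  else .unknown

/-- The set of IO delays consistent with observation `ρs` at `t` w.r.t. `L`. -/
def TConsDelays {A : Type u} (inp : A → Bool) (L : Set (ℕ → A × ℝ))
    (ρs : List (A × ℝ)) (t : ℝ) : Set (ℝ × ℝ × ℝ × ℝ) :=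
  {d | ∃ ρ, TCons inp d ρs ρ t ∧ ∃ μ, IsITW μ ∧ cat ρ (max t (dur ρ)) μ ∈ L}

section Stmt12Aux

variable {A : Type u}

private lemma ftw_mono {ρ : List (A × ℝ)} (h : IsFTW ρ) {i j : ℕ} (hij : i ≤ j)
    (hj : j < ρ.length) : (ρ[i]'(lt_of_le_of_lt hij hj)).2 ≤ (ρ[j]'hj).2 := by
  rcases eq_or_lt_of_le hij with rfl | hlt
  · exact le_refl _
  · haveI : IsTrans (A × ℝ) (fun p q => p.2 ≤ q.2) := ⟨fun _ _ _ => le_trans⟩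
    have hp := List.isChain_iff_pairwise.mp h.2
    have := List.pairwise_iff_get.mp hp ⟨i, lt_of_le_of_lt hij hj⟩ ⟨j, hj⟩ hlt
    simpa using this

private lemma dur_eq_getElem {ρ : List (A × ℝ)} (hne : ρ ≠ []) :
    dur ρ = (ρ[ρ.length - 1]'(by have := List.length_pos_iff.mpr hne; omega)).2 := by
  have h : ρ.length - 1 < ρ.length := by have := List.length_pos_iff.mpr hne; omega
  simp [dur, List.getLast?_eq_getElem?, List.getElem?_eq_getElem h]

private lemma dur_nonneg {ρ : List (A × ℝ)} (h : IsFTW ρ) : 0 ≤ dur ρ := by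
  rcases eq_or_ne ρ [] with rfl | hne
  · simp [dur]
  · rw [dur_eq_getElem hne]
    exact h.1 _ (List.getElem_mem _)

private lemma ts_le_dur {ρ : List (A × ℝ)} (h : IsFTW ρ) {i : ℕ} (hi : i < ρ.length) :
    (ρ[i]'hi).2 ≤ dur ρ := by
  have hne : ρ ≠ [] := by intro hc; subst hc; simp at hi
  rw [dur_eq_getElem hne]
  exact ftw_mono h (by omega) _

private lemma dur_take_le {ρ : List (A × ℝ)} (h : IsFTW ρ) (n : ℕ) :
    dur (ρ.take n) ≤ dur ρ := by
  rcases eq_or_ne (ρ.take n) [] with he | hne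
  · rw [he]; simpa [dur] using dur_nonneg h
  · rw [dur_eq_getElem hne]
    have hlt : (ρ.take n).length - 1 < (ρ.take n).length := by
      have := List.length_pos_iff.mpr hne; omega
    have hlt' : (ρ.take n).length - 1 < ρ.length := by
      rw [List.length_take] at hlt ⊢; omega
    rw [List.getElem_take]
    exact ts_le_dur h hlt'

/-- From a standard ground-truth, produce an equal-length one generating the same word. -/
private lemma to_el {δ ε : ℝ} (hδ : 0 ≤ δ) (hε : 0 ≤ ε) {ρs ρ : List (A × ℝ)} {t : ℝ}
    (hc : Consistent δ ε ρs ρ t) {μ : ℕ → A × ℝ} (hμ : IsITW μ) :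
    ∃ ρ', (Consistent δ ε ρs ρ' t ∧ ρ'.length = ρs.length) ∧ ∃ μ', IsITW μ' ∧
      cat ρ' (max (dur ρ') (t - (δ + ε))) μ' = cat ρ t μ := by
  obtain ⟨hftw, hdur, hdurs, hlen, hpt, hextra⟩ := hc
  set n := ρs.length with hn
  set ρ₁ := ρ.take n with hρ₁
  have len1 : ρ₁.length = n := by simp [hρ₁, List.length_take]; omega
  have hftw1 : IsFTW ρ₁ :=
    ⟨fun p hp => hftw.1 p (List.mem_of_mem_take hp), hftw.2.take n⟩
  have hd1 : dur ρ₁ ≤ dur ρ := dur_take_le hftw n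
  set t' := max (dur ρ₁) (t - (δ + ε)) with ht'def
  have ht'le : t' ≤ t := max_le (hd1.trans hdur) (by linarith)
  -- timestamps of ρ at indices ≥ n are ≥ t'
  have hkey : ∀ j (hj : j < ρ.length), n ≤ j → t' ≤ (ρ[j]'hj).2 := by
    intro j hj hnj
    refine max_le ?_ ?_
    · rcases Nat.eq_zero_or_pos n with h0 | h0
      · have : ρ₁ = [] := by
          apply List.eq_nil_of_length_eq_zero; omega
        rw [this]; simpa [dur] using hftw.1 _ (List.getElem_mem hj)
      · have hne : ρ₁ ≠ [] := by
          intro hc'; rw [hc'] at len1; simp at len1; omega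
        rw [dur_eq_getElem hne]
        have h1 : ρ₁.length - 1 < ρ.length := by omega
        have : (ρ₁[ρ₁.length - 1]'(by omega)) = ρ[ρ₁.length - 1]'h1 := List.getElem_take
        rw [this]
        exact ftw_mono hftw (by omega) hj
    · have hlt : n < ρ.length := lt_of_le_of_lt hnj hj
      have := hextra hlt _ (List.getElem?_eq_getElem hlt)
      calc t - (δ + ε) ≤ (ρ[n]'hlt).2 := this
        _ ≤ (ρ[j]'hj).2 := ftw_mono hftw hnj hj
  set μ' : ℕ → A × ℝ := fun i =>
    if h : n + i < ρ.length then ((ρ[n + i]'h).1, (ρ[n + i]'h).2 - t')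
    else ((μ (n + i - ρ.length)).1, (μ (n + i - ρ.length)).2 + t - t') with hμ'def
  have hμ'snd : ∀ i, 0 ≤ (μ' i).2 := by
    intro i
    by_cases h : n + i < ρ.length
    · simp only [hμ'def, dif_pos h]
      have := hkey (n + i) h (by omega); simpa using by linarith
    · simp only [hμ'def, dif_neg h]
      have := hμ.1 (n + i - ρ.length); simpa using by linarith
  refine ⟨ρ₁, ⟨⟨hftw1, hd1.trans hdur, hdurs, by omega, ?_, ?_⟩, len1⟩, μ', ⟨hμ'snd, ?_, ?_⟩, ?_⟩
  · -- pointwise consistency for ρ₁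
    intro i hi p q hp hq
    refine hpt i hi p q ?_ hq
    rw [← hp, hρ₁, List.getElem?_take, if_pos hi]
  · -- extra clause vacuous
    intro h; omega
  · -- monotonicity of μ'
    intro i
    by_cases h1 : n + i < ρ.length
    · by_cases h2 : n + (i + 1) < ρ.length
      · simp only [hμ'def, dif_pos h1, dif_pos h2]
        have := ftw_mono hftw (show n + i ≤ n + (i + 1) by omega) h2
        simpa using by linarith
      · simp only [hμ'def, dif_pos h1, dif_neg h2]
        have h3 : (ρ[n + i]'h1).2 ≤ dur ρ := ts_le_dur hftw h1
        have h4 := hμ.1 (n + (i + 1) - ρ.length)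
        simpa using by linarith
    · have h2 : ¬ n + (i + 1) < ρ.length := by omega
      simp only [hμ'def, dif_neg h1, dif_neg h2]
      have hix : n + (i + 1) - ρ.length = (n + i - ρ.length) + 1 := by omega
      rw [hix]
      have := hμ.2.1 (n + i - ρ.length)
      simpa using by linarith
  · -- divergence of μ'
    have h1 : Filter.Tendsto (fun i : ℕ => (μ (i - (ρ.length - n))).2 + (t - t'))
        Filter.atTop Filter.atTop :=
      Filter.tendsto_atTop_add_const_right _ _
        (hμ.2.2.comp (Filter.tendsto_sub_atTop_nat _))
    refine Filter.Tendsto.congr' ?_ h1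
    filter_upwards [Filter.eventually_ge_atTop ρ.length] with i hi
    have h2 : ¬ n + i < ρ.length := by omega
    simp only [hμ'def, dif_neg h2]
    have : n + i - ρ.length = i - (ρ.length - n) := by omega
    rw [this]; ring_nf
  · -- the two concatenations agree
    funext i
    simp only [cat, len1]
    by_cases h1 : i < n
    · have h2 : i < ρ.length := by omega
      rw [dif_pos h1, dif_pos h2]
      simp only [List.get_eq_getElem]
      exact (List.getElem_take : (ρ.take n)[i]'(by rw [← hρ₁, len1]; exact h1) = _)
    · rw [dif_neg h1]
      by_cases h2 : i < ρ.length
      · have h3 : n + (i - n) < ρ.length := by omega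
        rw [dif_pos h2]
        simp only [hμ'def, dif_pos h3, List.get_eq_getElem]
        have hii : n + (i - n) = i := by omega
        apply Prod.ext
        · simp only [hii]
        · simp only [hii]; ring
      · have h3 : ¬ n + (i - n) < ρ.length := by omega
        rw [dif_neg h2]
        simp only [hμ'def, dif_neg h3]
        have hii : n + (i - n) - ρ.length = i - ρ.length := by omega
        rw [hii]
        refine Prod.ext rfl ?_
        show (μ (i - ρ.length)).2 + t - t' + t' = (μ (i - ρ.length)).2 + t
        ring

/-- From an equal-length ground-truth, produce a standard one generating the same word. -/
private lemma from_el {δ ε : ℝ} (hδ : 0 ≤ δ) (hε : 0 ≤ ε) {ρs ρ : List (A × ℝ)} {t : ℝ}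
    (hc : Consistent δ ε ρs ρ t) (hlen : ρ.length = ρs.length) {μ : ℕ → A × ℝ}
    (hμ : IsITW μ) :
    ∃ ρ', Consistent δ ε ρs ρ' t ∧ ∃ μ', IsITW μ' ∧
      cat ρ' t μ' = cat ρ (max (dur ρ) (t - (δ + ε))) μ := by
  obtain ⟨hftw, hdur, hdurs, _, hpt, _⟩ := hc
  set n := ρ.length with hn
  set t' := max (dur ρ) (t - (δ + ε)) with ht'def
  have ht'0 : 0 ≤ t' := le_trans (dur_nonneg hftw) (le_max_left _ _)
  have hdt' : dur ρ ≤ t' := le_max_left _ _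
  have ht'le : t' ≤ t := max_le hdur (by linarith)
  have hmono : ∀ i j : ℕ, i ≤ j → (μ i).2 ≤ (μ j).2 := fun i j hij =>
    monotone_nat_of_le_succ hμ.2.1 hij
  have hex : ∃ k, t - t' < (μ k).2 := (hμ.2.2.eventually_gt_atTop (t - t')).exists
  set k := Nat.find hex with hkdef
  have hk : t - t' < (μ k).2 := Nat.find_spec hex
  have hmin : ∀ j, j < k → (μ j).2 ≤ t - t' := fun j hj =>
    le_of_not_gt (Nat.find_min hex hj)
  set ρ' := ρ ++ (List.range k).map (fun j => ((μ j).1, (μ j).2 + t')) with hρ'def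
  have len' : ρ'.length = n + k := by simp [hρ'def, hn]
  have hget1 : ∀ i, i < n → ρ'[i]? = ρ[i]? := by
    intro i hi
    rw [hρ'def, List.getElem?_append, if_pos hi]
  have hget2 : ∀ i, n ≤ i → i < n + k →
      ρ'[i]? = some ((μ (i - n)).1, (μ (i - n)).2 + t') := by
    intro i h1 h2
    rw [hρ'def, List.getElem?_append, if_neg (by omega), List.getElem?_map,
      List.getElem?_range (by omega)]
    rfl
  have hftw' : IsFTW ρ' := by
    constructor
    · intro p hp
      rw [hρ'def, List.mem_append] at hp
      rcases hp with hp | hp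
      · exact hftw.1 p hp
      · simp only [List.mem_map, List.mem_range] at hp
        obtain ⟨j, _, rfl⟩ := hp
        have := hμ.1 j; simpa using by linarith
    · rw [hρ'def]; show List.IsChain _ _; rw [List.isChain_append]
      refine ⟨hftw.2, ?_, ?_⟩
      · rw [List.isChain_iff_getElem]
        intro i h
        simp only [List.length_map, List.length_range] at h
        have hi1 : i < k := by omega
        have hi2 : i + 1 < k := by omega
        simp only [List.get_eq_getElem, List.getElem_map, List.getElem_range]
        have := hμ.2.1 i
        simpa using by linarith
      · intro x hx y hy
        have hxd : x.2 = dur ρ := by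
          have hx' : ρ.getLast? = some x := hx
          simp [dur, hx']
        have : y ∈ ((List.range k).map (fun j => ((μ j).1, (μ j).2 + t'))) := by
          exact List.mem_of_mem_head? hy
        simp only [List.mem_map, List.mem_range] at this
        obtain ⟨j, _, rfl⟩ := this
        have := hμ.1 j
        simp only [hxd]; simpa using by linarith
  have hdur' : dur ρ' ≤ t := by
    rcases Nat.eq_zero_or_pos k with h0 | h0
    · have : ρ' = ρ := by simp [hρ'def, h0]
      rw [this]; exact hdur
    · have hne : ρ' ≠ [] := by
        intro hcon
        have := congrArg List.length hcon
        rw [len'] at this; simp at this; omega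
      rw [dur_eq_getElem hne]
      have hlt : ρ'.length - 1 < ρ'.length := by rw [len']; omega
      have := hget2 (ρ'.length - 1) (by omega) (by omega)
      rw [List.getElem?_eq_getElem hlt] at this
      have heq := Option.some.inj this
      rw [heq]
      have hj : ρ'.length - 1 - n < k := by omega
      have := hmin _ hj
      simpa using by linarith
  set μ'' : ℕ → A × ℝ := fun i => ((μ (k + i)).1, (μ (k + i)).2 + (t' - t)) with hμ''def
  have hμ'' : IsITW μ'' := by
    refine ⟨?_, ?_, ?_⟩
    · intro i
      have := hmono k (k + i) (by omega)
      simp only [hμ''def]; simpa using by linarith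
    · intro i
      have := hμ.2.1 (k + i)
      simp only [hμ''def]
      have hki : k + (i + 1) = (k + i) + 1 := by omega
      rw [hki]; simpa using by linarith
    · have h1 : Filter.Tendsto (fun i : ℕ => (μ (k + i)).2 + (t' - t))
          Filter.atTop Filter.atTop := by
        refine Filter.tendsto_atTop_add_const_right _ _ (hμ.2.2.comp ?_)
        have := Filter.tendsto_add_atTop_nat k
        refine this.congr ?_
        intro a; exact Nat.add_comm a k
      exact h1
  refine ⟨ρ', ⟨hftw', hdur', hdurs, by omega, ?_, ?_⟩, μ'', hμ'', ?_⟩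
  · intro i hi p q hp hq
    refine hpt i hi p q ?_ hq
    rw [← hp, hget1 i (by omega)]
  · intro hlt p hp
    have h2 := hget2 ρs.length (by omega) (by rw [len'] at hlt; omega)
    rw [hp] at h2
    have := (Option.some.inj h2)
    rw [this]
    have : t - (δ + ε) ≤ t' := le_max_right _ _
    have := hμ.1 (ρs.length - n)
    simpa using by linarith
  · funext i
    simp only [cat, len']
    by_cases h1 : i < n
    · rw [dif_pos (show i < n + k by omega), dif_pos h1]
      have := hget1 i h1
      rw [List.getElem?_eq_getElem (show i < ρ'.length by omega),
        List.getElem?_eq_getElem (show i < ρ.length by omega)] at this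
      simpa using Option.some.inj this
    · by_cases h2 : i < n + k
      · rw [dif_pos h2, dif_neg h1]
        have := hget2 i (by omega) h2
        rw [List.getElem?_eq_getElem (show i < ρ'.length by omega)] at this
        simpa using Option.some.inj this
      · rw [dif_neg h2, dif_neg h1]
        have hii : k + (i - (n + k)) = i - n := by omega
        refine Prod.ext ?_ ?_
        · show (μ (k + (i - (n + k)))).1 = (μ (i - n)).1
          rw [hii]
        · show (μ (k + (i - (n + k)))).2 + (t' - t) + t = (μ (i - n)).2 + t'
          rw [hii]; ring

end Stmt12Aux

/-- the standard and equal-length verdict functions coincide. -/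
theorem stmt12 {A : Type u} [Nonempty A] (L : Set (ℕ → A × ℝ))
    (D : Set (ℝ × ℝ)) (hD : DelaySet D)
    (ρs : List (A × ℝ)) (hobs : DObs D ρs) (t : ℝ) (ht : dur ρs ≤ t) :
    verdictEL D L ρs t = verdict D L ρs t := by
  have hiff : ∀ P : (ℕ → A × ℝ) → Prop,
      ((∀ d ∈ D, ∀ ρ ∈ GTel d.1 d.2 ρs t, ∀ μ, IsITW μ →
        P (cat ρ (max (dur ρ) (t - (d.1 + d.2))) μ)) ↔
       (∀ ρ ∈ GT D ρs t, ∀ μ, IsITW μ → P (cat ρ t μ))) := by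
    intro P
    constructor
    · intro h ρ hρ μ hμ
      obtain ⟨d, hd, hc⟩ := hρ
      obtain ⟨hδ, hε⟩ := hD.2 d hd
      obtain ⟨ρ', ⟨hc', hlen'⟩, μ', hμ', heq⟩ := to_el hδ hε hc hμ
      have := h d hd ρ' ⟨hc', hlen'⟩ μ' hμ'
      rwa [heq] at this
    · intro h d hd ρ hρ μ hμ
      obtain ⟨hc, hlen⟩ := hρ
      obtain ⟨hδ, hε⟩ := hD.2 d hd
      obtain ⟨ρ', hc', μ', hμ', heq⟩ := from_el hδ hε hc hlen hμ
      have := h ρ' ⟨d, hd, hc'⟩ μ' hμ'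
      rwa [heq] at this
  unfold verdict verdictEL
  exact if_congr (hiff (· ∈ L)) rfl (if_congr (hiff (· ∉ L)) rfl rfl)
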